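/- Let f : 𝒫(ℕ×ℕ) → 𝒫(ℕ×ℕ) be defined by f(A) = {(n,m) : m ∈ ⋃_{i ≤ n} A_i}, and let Z = {A ⊆ ℕ×ℕ : there exist infinitely many n with A_n finite}. Then f⁻¹[Z] = {A ⊆ ℕ×ℕ : A_n is finite for every n}. -/
import Mathlib


/-- For `f(A) = {(n,m) : m ∈ ⋃_{i ≤ n} A_i}` and
`Z = {A : infinitely many vertical sections of A are finite}`,
we have `f⁻¹[Z] = {A : every vertical section of A is finite}` (the set `∅ × Fin`). -/
theorem stmt2 (f : ((ℕ × ℕ) → Bool) → ((ℕ × ℕ) → Bool))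
    (hf : ∀ A n m, f A (n, m) = true ↔ ∃ i ≤ n, A (i, m) = true) :
    f ⁻¹' {A : (ℕ × ℕ) → Bool | ∀ N : ℕ, ∃ n ≥ N, {k : ℕ | A (n, k) = true}.Finite}
      = {A : (ℕ × ℕ) → Bool | ∀ n : ℕ, {k : ℕ | A (n, k) = true}.Finite} := by
  ext A
  simp only [Set.mem_preimage, Set.mem_setOf_eq]
  constructor
  · intro h n
    obtain ⟨n', hn', hfin⟩ := h n
    apply hfin.subset
    intro k hk
    exact (hf A n' k).mpr ⟨n, hn', hk⟩
  · intro h N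
    refine ⟨N, le_refl N, ?_⟩
    have : {k : ℕ | f A (N, k) = true} ⊆ ⋃ i ∈ Finset.range (N + 1), {k : ℕ | A (i, k) = true} := by
      intro k hk
      obtain ⟨i, hi, hik⟩ := (hf A N k).mp hk
      exact Set.mem_biUnion (Finset.mem_range.mpr (Nat.lt_succ_of_le hi)) hik
    exact (Set.Finite.biUnion (Finset.range (N + 1)).finite_toSet (fun i _ => h i)).subset this
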